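/- The clobber position oxoxox (alternating path of length 6) is equivalent to the zero game, i.e. it is a second-player win. -/

import Mathlib

universe u

namespace SetTheory

/-- Pre-games (removed from Mathlib; restored here with the old Mathlib meaning). -/
inductive PGame : Type (u + 1)
  | mk : ∀ α β : Type u, (α → PGame) → (β → PGame) → PGame

namespace PGame

/-- The pre-game with lists of left and right options, as in the old Mathlib. -/
def ofLists (L R : List PGame.{u}) : PGame.{u} :=
  mk (ULift (Fin L.length)) (ULift (Fin R.length)) (fun i => L.get i.down) fun j => R.get j.down

instance : Zero PGame := ⟨⟨PEmpty, PEmpty, PEmpty.elim, PEmpty.elim⟩⟩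

/-- Simultaneous definition of `x ≤ y` (first component) and `x ⧏ y` (second component). -/
noncomputable def leLF : PGame.{u} → PGame.{u} → Prop × Prop
  | mk _ _ xL xR, y =>
    @PGame.rec (fun _ => Prop × Prop)
      (fun yl yr yL yR ihL ihR =>
        ((∀ i, (leLF (xL i) (mk yl yr yL yR)).2) ∧ ∀ j, (ihR j).2,
          (∃ i, (ihL i).1) ∨ ∃ j, (leLF (xR j) (mk yl yr yL yR)).1)) y

instance : LE PGame := ⟨fun x y => (leLF x y).1⟩

/-- Equivalence of pre-games: `x ≤ y ∧ y ≤ x`. -/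
def Equiv (x y : PGame) : Prop := x ≤ y ∧ y ≤ x

instance : HasEquiv PGame := ⟨Equiv⟩

end PGame

end SetTheory

open SetTheory PGame

inductive Cell | x | o | e
deriving DecidableEq

abbrev Pos := List Cell

/-- All positions reachable by one move of the player with stones `me`
clobbering an adjacent stone of the opponent `opp`. -/
def movesAux (me opp : Cell) : Pos → List Pos
  | a :: b :: rest =>
      (if a = me ∧ b = opp then [Cell.e :: me :: rest] else []) ++
      (if a = opp ∧ b = me then [me :: Cell.e :: rest] else []) ++
      (movesAux me opp (b :: rest)).map (a :: ·)
  | _ => []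

def leftMoves (p : Pos) : List Pos := movesAux Cell.x Cell.o p
def rightMoves (p : Pos) : List Pos := movesAux Cell.o Cell.x p

def stones (p : Pos) : Nat := p.countP (· != Cell.e)

/-- Game value of a clobber position, via fuel recursion (each move removes one stone). -/
def valueFuel : Nat → Pos → PGame
  | 0, _ => 0
  | n+1, p => PGame.ofLists ((leftMoves p).map (valueFuel n)) ((rightMoves p).map (valueFuel n))

def value (p : Pos) : PGame := valueFuel (stones p) p


/-!
`0 ≤ G` says that Left wins `G` when Right starts, and `G ≤ 0` that Right wins when Left
starts. For a clobber position both unfold, move by move, into finite and-or searches over the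
positions reachable from it, and evaluating these searches on `oxoxox` shows that whoever
moves first loses.
-/
namespace SetTheory.PGame

/-- The "less or fuzzy" relation: the second component of `leLF`. -/
def LF (x y : PGame) : Prop := (leLF x y).2

infix:50 " ⧏ " => LF

variable {L R : List PGame.{u}}

theorem zero_le_zero : (0 : PGame.{u}) ≤ 0 :=
  ⟨fun i => i.elim, fun j => j.elim⟩

theorem zero_le_ofLists : 0 ≤ ofLists L R ↔ ∀ r ∈ R, 0 ⧏ r := by
  refine ⟨fun h r hr => ?_, fun h => ⟨fun i => i.elim, fun j => h _ (List.get_mem R j.down)⟩⟩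
  obtain ⟨k, rfl⟩ := List.get_of_mem hr
  exact h.2 ⟨k⟩

theorem zero_lf_ofLists : 0 ⧏ ofLists L R ↔ ∃ l ∈ L, 0 ≤ l := by
  constructor
  · rintro (⟨i, hi⟩ | ⟨j, -⟩)
    · exact ⟨_, List.get_mem L i.down, hi⟩
    · exact j.elim
  · rintro ⟨l, hl, h⟩
    obtain ⟨k, rfl⟩ := List.get_of_mem hl
    exact Or.inl ⟨⟨k⟩, h⟩

theorem ofLists_le_zero : ofLists L R ≤ 0 ↔ ∀ l ∈ L, l ⧏ 0 := by
  refine ⟨fun h l hl => ?_, fun h => ⟨fun i => h _ (List.get_mem L i.down), fun j => j.elim⟩⟩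
  obtain ⟨k, rfl⟩ := List.get_of_mem hl
  exact h.1 ⟨k⟩

theorem ofLists_lf_zero : ofLists L R ⧏ 0 ↔ ∃ r ∈ R, r ≤ 0 := by
  constructor
  · rintro (⟨i, -⟩ | ⟨j, hj⟩)
    · exact i.elim
    · exact ⟨_, List.get_mem R j.down, hj⟩
  · rintro ⟨r, hr, h⟩
    obtain ⟨k, rfl⟩ := List.get_of_mem hr
    exact Or.inr ⟨⟨k⟩, h⟩

end SetTheory.PGame

theorem valueFuel_succ (n : ℕ) (p : Pos) :
    valueFuel (n + 1) p =
      ofLists ((leftMoves p).map (valueFuel n)) ((rightMoves p).map (valueFuel n)) :=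
  rfl

-- At fuel `0` the searches report the outcome of `valueFuel 0 p = 0`.
mutual
def leftWinsSecond : ℕ → Pos → Bool
  | 0, _ => true
  | n + 1, p => (rightMoves p).all (leftWinsFirst n)
def leftWinsFirst : ℕ → Pos → Bool
  | 0, _ => false
  | n + 1, p => (leftMoves p).any (leftWinsSecond n)
end

mutual
def rightWinsSecond : ℕ → Pos → Bool
  | 0, _ => true
  | n + 1, p => (leftMoves p).all (rightWinsFirst n)
def rightWinsFirst : ℕ → Pos → Bool
  | 0, _ => false
  | n + 1, p => (rightMoves p).any (rightWinsSecond n)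
end

mutual
theorem zero_le_valueFuel_of_leftWinsSecond :
    ∀ n p, leftWinsSecond n p → 0 ≤ valueFuel n p
  | 0, _, _ => zero_le_zero
  | n + 1, p, h => by
    rw [valueFuel_succ, zero_le_ofLists, List.forall_mem_map]
    exact fun q hq => zero_lf_valueFuel_of_leftWinsFirst n q (List.all_eq_true.1 h q hq)
theorem zero_lf_valueFuel_of_leftWinsFirst :
    ∀ n p, leftWinsFirst n p → 0 ⧏ valueFuel n p
  | n + 1, p, h => by
    obtain ⟨q, hq, hwin⟩ := List.any_eq_true.1 h
    rw [valueFuel_succ, zero_lf_ofLists]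
    exact ⟨_, List.mem_map_of_mem hq, zero_le_valueFuel_of_leftWinsSecond n q hwin⟩
end

mutual
theorem valueFuel_le_zero_of_rightWinsSecond :
    ∀ n p, rightWinsSecond n p → valueFuel n p ≤ 0
  | 0, _, _ => zero_le_zero
  | n + 1, p, h => by
    rw [valueFuel_succ, ofLists_le_zero, List.forall_mem_map]
    exact fun q hq => valueFuel_lf_zero_of_rightWinsFirst n q (List.all_eq_true.1 h q hq)
theorem valueFuel_lf_zero_of_rightWinsFirst :
    ∀ n p, rightWinsFirst n p → valueFuel n p ⧏ 0
  | n + 1, p, h => by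
    obtain ⟨q, hq, hwin⟩ := List.any_eq_true.1 h
    rw [valueFuel_succ, ofLists_lf_zero]
    exact ⟨_, List.mem_map_of_mem hq, valueFuel_le_zero_of_rightWinsSecond n q hwin⟩
end

theorem value_equiv_zero_of_wins (p : Pos)
    (hR : rightWinsSecond (stones p) p) (hL : leftWinsSecond (stones p) p) :
    value p ≈ (0 : PGame) :=
  ⟨valueFuel_le_zero_of_rightWinsSecond _ p hR, zero_le_valueFuel_of_leftWinsSecond _ p hL⟩

/-- The clobber position `oxoxox` is a second-player win, i.e. equivalent to `0`. -/
theorem oxoxox_equiv_zero :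
    value [Cell.o, Cell.x, Cell.o, Cell.x, Cell.o, Cell.x] ≈ (0 : PGame) :=
  value_equiv_zero_of_wins _ (by decide) (by decide)
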